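/- For every real x with |x| ≤ 1, the series ∑_{ℓ=0}^∞ (binom(2ℓ, ℓ) · 2^{−2ℓ} / (2ℓ+1)) · x^{2ℓ+1} converges to arcsin(x). In particular, taking x = 1, the sum of the (nonnegative) Taylor coefficients of arcsin equals π/2, i.e. ∑_{ℓ=0}^∞ binom(2ℓ, ℓ) · 2^{−2ℓ} / (2ℓ+1) = π/2. -/

import Mathlib

/-!
The numbers `cₙ = C(2n, n) / 4ⁿ` are the binomial-series coefficients of `(1 - t)^(-1/2)`, so
substituting `t = x²` gives `∑ cₙ x²ⁿ = 1 / √(1 - x²) = arcsin' x` on `(-1, 1)`. Differentiating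
`∑ cₙ / (2n + 1) · x²ⁿ⁺¹` termwise shows that it and `arcsin` have the same derivative on `(-1, 1)`
and agree at `0`. Since `cₙ / (2n + 1) ≤ 2 (cₙ - cₙ₊₁)` telescopes, the odd series converges
absolutely and uniformly on `[-1, 1]`, and continuity carries the identity to `x = ±1`.
-/

open Real

-- Written in the shape of the summand in `arcsin_taylor_series`, which then unfolds to it.
noncomputable def invSqrtCoeff (n : ℕ) : ℝ := (Nat.choose (2 * n) n : ℝ) * ((2 : ℝ) ^ (2 * n))⁻¹

lemma invSqrtCoeff_zero : invSqrtCoeff 0 = 1 := by simp [invSqrtCoeff]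

lemma invSqrtCoeff_succ_mul (n : ℕ) :
    invSqrtCoeff (n + 1) * (2 * n + 2) = invSqrtCoeff n * (2 * n + 1) := by
  have h : ((n : ℝ) + 1) * (2 * (n + 1)).choose (n + 1) = 2 * (2 * n + 1) * (2 * n).choose n := by
    exact_mod_cast Nat.succ_mul_centralBinom_succ n
  simp only [invSqrtCoeff, mul_add, pow_add]
  field_simp
  linear_combination 2 * h

lemma invSqrtCoeff_pos (n : ℕ) : 0 < invSqrtCoeff n := by
  unfold invSqrtCoeff
  have := Nat.choose_pos (Nat.le_mul_of_pos_left n two_pos)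
  positivity

lemma invSqrtCoeff_succ_le (n : ℕ) : invSqrtCoeff (n + 1) ≤ invSqrtCoeff n := by
  nlinarith [invSqrtCoeff_succ_mul n, invSqrtCoeff_pos n, invSqrtCoeff_pos (n + 1)]

lemma invSqrtCoeff_le_one (n : ℕ) : invSqrtCoeff n ≤ 1 := by
  induction n with
  | zero => exact invSqrtCoeff_zero.le
  | succ n ih => exact (invSqrtCoeff_succ_le n).trans ih

lemma multichoose_one_half (n : ℕ) : Ring.multichoose (1 / 2 : ℝ) n = invSqrtCoeff n := by
  have key : (n.factorial : ℝ) * invSqrtCoeff n = (ascPochhammer ℝ n).eval (1 / 2) := by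
    induction n with
    | zero => simp [invSqrtCoeff_zero]
    | succ n ih =>
      rw [ascPochhammer_succ_eval, ← ih, Nat.factorial_succ]
      push_cast
      linear_combination (n.factorial : ℝ) / 2 * invSqrtCoeff_succ_mul n
  have := Ring.factorial_nsmul_multichoose_eq_ascPochhammer (1 / 2 : ℝ) n
  rw [Polynomial.ascPochhammer_smeval_eq_eval, nsmul_eq_mul, ← key] at this
  exact mul_left_cancel₀ (by positivity) this

lemma hasSum_invSqrtCoeff_mul_pow {x : ℝ} (hx : |x| < 1) :
    HasSum (fun n => invSqrtCoeff n * x ^ n) (1 / √(1 - x)) := by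
  have hx' : x ∈ Metric.eball (0 : ℝ) 1 := by
    rw [← ENNReal.ofReal_one, Metric.eball_ofReal]
    simpa using hx
  have h := (one_div_one_sub_rpow_hasFPowerSeriesOnBall_zero (1 / 2)).hasSum hx'
  simp only [FormalMultilinearSeries.ofScalars_apply_eq, zero_add, smul_eq_mul,
    ← Ring.multichoose_eq, multichoose_one_half, ← sqrt_eq_rpow] at h
  exact h

lemma hasSum_invSqrtCoeff_mul_pow_two_mul {x : ℝ} (hx : |x| < 1) :
    HasSum (fun n => invSqrtCoeff n * x ^ (2 * n)) (1 / √(1 - x ^ 2)) := by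
  simpa only [pow_mul] using hasSum_invSqrtCoeff_mul_pow (x := x ^ 2) (by simpa [abs_pow] using hx)

lemma invSqrtCoeff_div_le (n : ℕ) :
    invSqrtCoeff n / (2 * n + 1) ≤ 2 * (invSqrtCoeff n - invSqrtCoeff (n + 1)) := by
  have h := invSqrtCoeff_succ_mul n
  have hc := invSqrtCoeff_pos n
  rw [div_le_iff₀ (by positivity)]
  nlinarith

lemma summable_invSqrtCoeff_div : Summable fun n : ℕ => invSqrtCoeff n / (2 * n + 1) := by
  refine summable_of_sum_range_le (c := 2) (fun n => ?_) fun n => ?_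
  · have := invSqrtCoeff_pos n
    positivity
  · calc ∑ l ∈ Finset.range n, invSqrtCoeff l / (2 * l + 1)
        ≤ ∑ l ∈ Finset.range n, 2 * (invSqrtCoeff l - invSqrtCoeff (l + 1)) :=
          Finset.sum_le_sum fun l _ => invSqrtCoeff_div_le l
      _ = 2 * (invSqrtCoeff 0 - invSqrtCoeff n) := by
          rw [← Finset.mul_sum, Finset.sum_range_sub']
      _ ≤ 2 := by linarith [invSqrtCoeff_zero, invSqrtCoeff_pos n]

lemma hasDerivAt_tsum_div_mul_pow_odd {b : ℕ → ℝ} (hb : ∀ n, |b n| ≤ 1) {x : ℝ} (hx : |x| < 1) :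
    HasDerivAt (fun y => ∑' n : ℕ, b n / (2 * n + 1) * y ^ (2 * n + 1))
      (∑' n : ℕ, b n * x ^ (2 * n)) x := by
  obtain ⟨r, hxr, hr1⟩ := exists_between hx
  have hr0 : 0 < r := (abs_nonneg x).trans_lt hxr
  refine hasDerivAt_tsum_of_isPreconnected (u := fun n => (r ^ 2) ^ n) (t := Set.Ioo (-r) r)
    (g := fun n y => b n / (2 * n + 1) * y ^ (2 * n + 1)) (g' := fun n y => b n * y ^ (2 * n))
    (summable_geometric_of_lt_one (by positivity) (by nlinarith))
    isOpen_Ioo isPreconnected_Ioo (fun n y _ => ?_) (fun n y hy => ?_)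
    (y₀ := 0) ⟨neg_lt_zero.2 hr0, hr0⟩ ?_ (abs_lt.mp hxr)
  · refine ((hasDerivAt_pow (2 * n + 1) y).const_mul (b n / (2 * n + 1))).congr_deriv ?_
    rw [Nat.add_sub_cancel]
    push_cast
    field_simp
  · rw [Real.norm_eq_abs, abs_mul, abs_pow, ← pow_mul]
    have hy : |y| ≤ r := abs_le.mpr ⟨hy.1.le, hy.2.le⟩
    calc |b n| * |y| ^ (2 * n) ≤ 1 * r ^ (2 * n) := by gcongr; exact hb n
      _ = r ^ (2 * n) := one_mul _
  · simp

lemma hasDerivAt_tsum_invSqrtCoeff_div_mul_pow {x : ℝ} (hx : |x| < 1) :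
    HasDerivAt (fun y => ∑' n : ℕ, invSqrtCoeff n / (2 * n + 1) * y ^ (2 * n + 1))
      (1 / √(1 - x ^ 2)) x := by
  rw [← (hasSum_invSqrtCoeff_mul_pow_two_mul hx).tsum_eq]
  refine hasDerivAt_tsum_div_mul_pow_odd (fun n => ?_) hx
  rw [abs_of_pos (invSqrtCoeff_pos n)]
  exact invSqrtCoeff_le_one n

lemma eqOn_tsum_invSqrtCoeff_div_mul_pow_arcsin :
    Set.EqOn (fun x => ∑' n : ℕ, invSqrtCoeff n / (2 * n + 1) * x ^ (2 * n + 1)) arcsin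
      (Set.Ioo (-1) 1) := by
  have hderiv (x : ℝ) (hx : x ∈ Set.Ioo (-1) 1) :=
    hasDerivAt_tsum_invSqrtCoeff_div_mul_pow (abs_lt.mpr hx)
  refine isOpen_Ioo.eqOn_of_deriv_eq isPreconnected_Ioo
    (fun x hx => (hderiv x hx).differentiableAt.differentiableWithinAt)
    (differentiableOn_arcsin.mono fun x hx => ?_) (fun x hx => ?_)
    (show (0 : ℝ) ∈ Set.Ioo (-1) 1 by norm_num) (by simp)
  · simp only [Set.mem_compl_iff, Set.mem_insert_iff, Set.mem_singleton_iff, not_or]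
    exact ⟨hx.1.ne', hx.2.ne⟩
  · rw [(hderiv x hx).deriv, deriv_arcsin]

lemma abs_mul_pow_le_abs (a : ℝ) {x : ℝ} (hx : |x| ≤ 1) (k : ℕ) : |a * x ^ k| ≤ |a| := by
  rw [abs_mul, abs_pow]
  exact mul_le_of_le_one_right (abs_nonneg a) (pow_le_one₀ (abs_nonneg x) hx)

lemma continuousOn_tsum_mul_pow {a : ℕ → ℝ} (ha : Summable fun n => |a n|) (e : ℕ → ℕ) :
    ContinuousOn (fun x => ∑' n, a n * x ^ e n) (Set.Icc (-1) 1) :=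
  continuousOn_tsum (fun _ => (continuous_const.mul (continuous_pow _)).continuousOn) ha
    fun n _ hx => abs_mul_pow_le_abs (a n) (abs_le.mpr hx) (e n)

lemma hasSum_arcsin {x : ℝ} (hx : |x| ≤ 1) :
    HasSum (fun n : ℕ => invSqrtCoeff n / (2 * n + 1) * x ^ (2 * n + 1)) (arcsin x) := by
  have ha := summable_invSqrtCoeff_div.abs
  have hIcc := eqOn_tsum_invSqrtCoeff_div_mul_pow_arcsin.of_subset_closure
    (continuousOn_tsum_mul_pow ha _) continuous_arcsin.continuousOn Set.Ioo_subset_Icc_self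
    (closure_Ioo (by norm_num)).ge
  rw [(ha.of_norm_bounded fun n => abs_mul_pow_le_abs _ hx (2 * n + 1)).hasSum_iff]
  exact hIcc (abs_le.mp hx)

/-- **Taylor series of arcsin on `[-1, 1]`.**
For `|x| ≤ 1`, `arcsin x = ∑ₗ binom(2ℓ,ℓ) 2^{-2ℓ}/(2ℓ+1) · x^{2ℓ+1}`; in particular
the sum of the coefficients equals `π/2`. -/
theorem arcsin_taylor_series :
    (∀ x : ℝ, |x| ≤ 1 →
      HasSum
        (fun l : ℕ =>
          (Nat.choose (2 * l) l : ℝ) * ((2 : ℝ) ^ (2 * l))⁻¹ / (2 * l + 1)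
            * x ^ (2 * l + 1))
        (Real.arcsin x)) ∧
    (∑' l : ℕ, (Nat.choose (2 * l) l : ℝ) * ((2 : ℝ) ^ (2 * l))⁻¹ / (2 * l + 1))
      = π / 2 := by
  refine ⟨fun x hx => hasSum_arcsin hx, ?_⟩
  have h := (hasSum_arcsin (x := 1) (by norm_num)).tsum_eq
  simp only [one_pow, mul_one, arcsin_one] at h
  exact h
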